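/- arXiv:2507.18662 — 3 statements merged into one kernel-verified Lean document; each statement's English description precedes it below -/
import Mathlib

section
/- Let p > 1, and let v solve (|v'|^(p-2)v')' + h(t) f(v) = 0 on [0, z] with v(0) = 0, v'(0) = a > 0, where h > 0 is decreasing and f = F' with F(0) = 0. If v(z) = 0 and v'(z) = 0 for some z > 0, then v ≡ 0 on [0, z]; in particular, since v'(0) = a > 0, any zero z ∈ (0, T) of v satisfies v'(z) ≠ 0. -/
/-!
With `h` frozen at a point `x`, the energy `E = (p-1)/p |v'|^p / h + F(v)` is stationary at `x`
along the equation wherever `v(x) ≠ 0`; as `1/h` is nondecreasing and the kinetic term is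
nonnegative, `E` is nondecreasing. Since `h` is only monotone, this is proved by real induction,
which also carries the monotonicity across zeros of `v` as long as they are simple.

Near `t = 0` we have `v' ≥ a/2`, and monotonicity of `E - m/h` with `m = (p-1)/p (a/2)^p` gives
`E(δ) ≥ m / h(δ) > 0` for small `δ`. At the first common zero `T` of `v` and `v'` we have
`E(T) = 0`, contradicting the monotonicity of `E` on `[δ, T]`.
-/

open Set Filter Topology

theorem le_add_mul_sub_of_forall_eventually {G : ℝ → ℝ} {a b r : ℝ} (hab : a ≤ b)
    (hr : 0 < r) (hR : ∀ x ∈ Ico a b, ∀ ε > 0, ∀ᶠ u in 𝓝[>] x, G x ≤ G u + ε * (u - x))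
    (hL : ∀ x ∈ Ioc a b, UpperSemicontinuousWithinAt G (Iic x) x) :
    G a ≤ G b + r * (b - a) := by
  set S := {x ∈ Icc a b | G a ≤ G x + r * (x - a)}
  have haS : a ∈ S := ⟨left_mem_Icc.2 hab, by simp⟩
  have hS : IsLUB S (sSup S) := isLUB_csSup ⟨a, haS⟩ ⟨b, fun x hx => hx.1.2⟩
  set c := sSup S
  have hac : a ≤ c := hS.1 haS
  have hcb : c ≤ b := hS.2 fun x hx => hx.1.2
  have hcS : G a ≤ G c + r * (c - a) := by
    rcases hac.eq_or_lt with hac | hac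
    · simp [← hac]
    refine le_of_forall_pos_lt_add fun η hη => ?_
    obtain ⟨u, hGu, huS⟩ := ((upperSemicontinuousWithinAt_iff.1 (hL c ⟨hac, hcb⟩) (G c + η)
      (by linarith)).and_frequently (hS.frequently_mem ⟨a, haS⟩)).exists
    have : r * (u - a) ≤ r * (c - a) := by gcongr; exact hS.1 huS
    linarith [huS.2]
  rcases hcb.eq_or_lt with hcb | hcb
  · rwa [hcb] at hcS
  obtain ⟨u, hGu, hcu, hub⟩ := ((hR c ⟨hac, hcb⟩ r hr).and (Ioc_mem_nhdsGT hcb)).exists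
  have huS : u ∈ S := ⟨⟨hac.trans hcu.le, hub⟩, by linarith⟩
  exact absurd (hS.1 huS) hcu.not_ge

theorem monotoneOn_of_forall_eventually {G : ℝ → ℝ} {a b : ℝ}
    (hR : ∀ x ∈ Ico a b, ∀ ε > 0, ∀ᶠ u in 𝓝[>] x, G x ≤ G u + ε * (u - x))
    (hL : ∀ x ∈ Ioc a b, UpperSemicontinuousWithinAt G (Iic x) x) :
    MonotoneOn G (Icc a b) := by
  intro x hx y hy hxy
  have hlim : Tendsto (fun ε : ℝ => G y + ε * (y - x)) (𝓝[>] 0) (𝓝 (G y)) := by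
    simpa using ((continuous_id.mul continuous_const).const_add (G y)).tendsto' (0 : ℝ) _
      (by simp) |>.mono_left nhdsWithin_le_nhds
  refine ge_of_tendsto hlim (eventually_nhdsWithin_of_forall fun ε hε => ?_)
  exact le_add_mul_sub_of_forall_eventually hxy hε
    (fun t ht => hR t ⟨hx.1.trans ht.1, ht.2.trans_le hy.2⟩)
    (fun t ht => hL t ⟨hx.1.trans_lt ht.1, ht.2.trans hy.2⟩)

section MulAdd

variable {A B k : ℝ → ℝ} {a b x : ℝ}

theorem upperSemicontinuousWithinAt_mul_add (hA : ∀ u ∈ Icc a b, 0 ≤ A u)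
    (hk : MonotoneOn k (Icc a b)) (hAc : ContinuousOn A (Icc a b)) (hBc : ContinuousOn B (Icc a b))
    (hx : x ∈ Ioc a b) : UpperSemicontinuousWithinAt (fun u => A u * k u + B u) (Iic x) x := by
  have hxab : x ∈ Icc a b := Ioc_subset_Icc_self hx
  have hC : ContinuousWithinAt (fun u => A u * k x + B u) (Iic x) x :=
    ((hAc.mul continuousOn_const).add hBc x hxab).mono_of_mem_nhdsWithin
      (Icc_mem_nhdsLE_of_mem hx)
  refine upperSemicontinuousWithinAt_iff.2 fun y hy => ?_
  filter_upwards [hC.eventually (gt_mem_nhds hy), Icc_mem_nhdsLE_of_mem hx, self_mem_nhdsWithin]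
    with u hCu hu hux
  have := mul_le_mul_of_nonneg_left (hk hu hxab hux) (hA u hu)
  linarith

theorem lowerSemicontinuousWithinAt_mul_add (hA : ∀ u ∈ Icc a b, 0 ≤ A u)
    (hk : MonotoneOn k (Icc a b)) (hAc : ContinuousOn A (Icc a b)) (hBc : ContinuousOn B (Icc a b))
    (hx : x ∈ Ico a b) : LowerSemicontinuousWithinAt (fun u => A u * k u + B u) (Ioi x) x := by
  have hxab : x ∈ Icc a b := Ico_subset_Icc_self hx
  have hmem : Icc a b ∈ 𝓝[>] x :=
    mem_of_superset (Ioc_mem_nhdsGT hx.2) (Ioc_subset_Icc_self.trans (Icc_subset_Icc_left hx.1))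
  have hC : ContinuousWithinAt (fun u => A u * k x + B u) (Ioi x) x :=
    ((hAc.mul continuousOn_const).add hBc x hxab).mono_of_mem_nhdsWithin hmem
  refine lowerSemicontinuousWithinAt_iff.2 fun y hy => ?_
  filter_upwards [hC.eventually (lt_mem_nhds hy), hmem, self_mem_nhdsWithin] with u hCu hu hxu
  have := mul_le_mul_of_nonneg_left (hk hxab hu (le_of_lt hxu)) (hA u hu)
  linarith

theorem eventually_le_mul_add_add_mul (hA : ∀ u ∈ Icc a b, 0 ≤ A u)
    (hk : MonotoneOn k (Icc a b)) (hx : x ∈ Ico a b)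
    (hd : HasDerivAt (fun u => A u * k x + B u) 0 x) {ε : ℝ} (hε : 0 < ε) :
    ∀ᶠ u in 𝓝[>] x, A x * k x + B x ≤ A u * k u + B u + ε * (u - x) := by
  have hxab : x ∈ Icc a b := Ico_subset_Icc_self hx
  have hmem : Icc a b ∈ 𝓝[>] x :=
    mem_of_superset (Ioc_mem_nhdsGT hx.2) (Ioc_subset_Icc_self.trans (Icc_subset_Icc_left hx.1))
  filter_upwards [nhdsWithin_le_nhds ((hasDerivAt_iff_isLittleO.1 hd).def hε), hmem,
    self_mem_nhdsWithin] with u hCu hu (hxu : x < u)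
  rw [smul_zero, sub_zero, Real.norm_eq_abs, Real.norm_eq_abs, abs_of_pos (sub_pos.2 hxu)] at hCu
  have := mul_le_mul_of_nonneg_left (hk hxab hu (le_of_lt hxu)) (hA u hu)
  linarith [neg_abs_le (A u * k x + B u - (A x * k x + B x))]

theorem monotoneOn_mul_add (hA : ∀ u ∈ Icc a b, 0 ≤ A u)
    (hk : MonotoneOn k (Icc a b)) (hAc : ContinuousOn A (Icc a b)) (hBc : ContinuousOn B (Icc a b))
    (hd : ∀ x ∈ Ico a b, HasDerivAt (fun u => A u * k x + B u) 0 x) :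
    MonotoneOn (fun u => A u * k u + B u) (Icc a b) :=
  monotoneOn_of_forall_eventually
    (fun x hx _ hε => eventually_le_mul_add_add_mul hA hk hx (hd x hx) hε)
    (fun _ hx => upperSemicontinuousWithinAt_mul_add hA hk hAc hBc hx)

theorem monotoneOn_mul_add_of_forall_exists_monotoneOn (hA : ∀ u ∈ Icc a b, 0 ≤ A u)
    (hk : MonotoneOn k (Icc a b)) (hAc : ContinuousOn A (Icc a b)) (hBc : ContinuousOn B (Icc a b))
    (hloc : ∀ x ∈ Ico a b, ∃ c > x, MonotoneOn (fun u => A u * k u + B u) (Ioo x c)) :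
    MonotoneOn (fun u => A u * k u + B u) (Icc a b) := by
  refine monotoneOn_of_forall_eventually (fun x hx ε hε => ?_)
    (fun _ hx => upperSemicontinuousWithinAt_mul_add hA hk hAc hBc hx)
  obtain ⟨c, hxc, hmono⟩ := hloc x hx
  have hlsc := lowerSemicontinuousWithinAt_iff.1
    (lowerSemicontinuousWithinAt_mul_add hA hk hAc hBc hx)
  filter_upwards [Ioo_mem_nhdsGT hxc] with u hu
  suffices A x * k x + B x ≤ A u * k u + B u from
    this.trans (le_add_of_nonneg_right (mul_nonneg hε.le (sub_nonneg.2 hu.1.le)))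
  refine le_of_forall_pos_lt_add fun η hη => ?_
  obtain ⟨w, hw, hxw, hwu⟩ := ((hlsc _ (sub_lt_self _ hη)).and (Ioc_mem_nhdsGT hu.1)).exists
  have := hmono ⟨hxw, hwu.trans_lt hu.2⟩ hu hwu
  linarith

end MulAdd

theorem abs_abs_rpow_sub_two_mul {p : ℝ} (hp : 1 < p) (y : ℝ) :
    |(|y| ^ (p - 2) * y)| = |y| ^ (p - 1) := by
  rcases eq_or_ne y 0 with rfl | hy
  · simp [Real.zero_rpow (by linarith : p - 1 ≠ 0)]
  rw [abs_mul, abs_of_nonneg (by positivity), show p - 1 = p - 2 + 1 by ring,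
    Real.rpow_add_one (abs_ne_zero.2 hy)]

-- `(p-1)/p |w|^p = |φ|^q / q` for `φ = |w|^(p-2) w` and the conjugate exponent `q = p/(p-1)`,
-- and `|φ|^(q-2) φ = w`.
theorem HasDerivAt.kinetic {p W x : ℝ} {w : ℝ → ℝ} (hp : 1 < p)
    (hw : HasDerivAt (fun s => |w s| ^ (p - 2) * w s) W x) :
    HasDerivAt (fun s => (p - 1) / p * |w s| ^ p) (w x * W) x := by
  set q := p / (p - 1) with hq_def
  have hp1 : 0 < p - 1 := by linarith
  have hq : 1 < q := (one_lt_div hp1).2 (by linarith)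
  have hpow : ∀ y : ℝ, |(|y| ^ (p - 2) * y)| ^ q = |y| ^ p := fun y => by
    rw [abs_abs_rpow_sub_two_mul hp, ← Real.rpow_mul (abs_nonneg y), hq_def,
      mul_div_cancel₀ _ hp1.ne']
  have hinv : ∀ y : ℝ, |(|y| ^ (p - 2) * y)| ^ (q - 2) * (|y| ^ (p - 2) * y) = y := fun y => by
    rcases eq_or_ne y 0 with rfl | hy
    · simp
    have hexp : (p - 1) * (q - 2) + (p - 2) = 0 := by rw [hq_def]; field_simp; ring
    rw [abs_abs_rpow_sub_two_mul hp, ← Real.rpow_mul (abs_nonneg y), ← mul_assoc,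
      ← Real.rpow_add (abs_pos.2 hy), hexp, Real.rpow_zero, one_mul]
  have hcoef : (p - 1) / p * q = 1 := by rw [hq_def]; field_simp
  simp_rw [← hpow (w _)]
  refine (((hasDerivAt_abs_rpow _ hq).comp x hw).const_mul ((p - 1) / p)).congr_deriv ?_
  linear_combination
    (hinv (w x) + |(|w x| ^ (p - 2) * w x)| ^ (q - 2) * (|w x| ^ (p - 2) * w x) * hcoef) * W

theorem monotoneOn_inv_of_antitoneOn {h : ℝ → ℝ} {s : Set ℝ} (hpos : ∀ t ∈ s, 0 < h t)
    (hh : AntitoneOn h s) : MonotoneOn (fun t => (h t)⁻¹) s :=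
  fun _ hx _ hy hxy => inv_anti₀ (hpos _ hy) (hh hx hy hxy)

-- `energy p 0` is the paper's `E`; `energy p m = E - m / h`.
noncomputable def energy (p m : ℝ) (h F v v' : ℝ → ℝ) (t : ℝ) : ℝ :=
  ((p - 1) / p * |v' t| ^ p - m) * (h t)⁻¹ + F (v t)

theorem hasDerivAt_energy_freeze {p m x : ℝ} {h f F v v' : ℝ → ℝ} (hp : 1 < p)
    (hhx : h x ≠ 0) (hF : HasDerivAt F (f (v x)) (v x)) (hv : HasDerivAt v (v' x) x)
    (hode : HasDerivAt (fun s => |v' s| ^ (p - 2) * v' s) (-(h x * f (v x))) x) :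
    HasDerivAt (fun u => ((p - 1) / p * |v' u| ^ p - m) * (h x)⁻¹ + F (v u)) 0 x := by
  refine ((((hode.kinetic hp).sub_const m).mul_const (h x)⁻¹).add (hF.comp x hv)).congr_deriv
    ?_
  field_simp
  ring

theorem energy_monotoneOn {p z m a b : ℝ} {h f F v v' : ℝ → ℝ} (hp : 1 < p)
    (hhpos : ∀ t ∈ Ioc 0 z, 0 < h t) (hhdec : AntitoneOn h (Ioc 0 z))
    (hF : ∀ x : ℝ, x ≠ 0 → HasDerivAt F (f x) x) (hFcont : Continuous F)
    (hv : ∀ t ∈ Icc 0 z, HasDerivAt v (v' t) t) (hv'cont : ContinuousOn v' (Icc 0 z))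
    (hode : ∀ t ∈ Ioo 0 z, v t ≠ 0 →
      HasDerivAt (fun s => |v' s| ^ (p - 2) * v' s) (-(h t * f (v t))) t)
    (ha : 0 < a) (hbz : b ≤ z) (hm : ∀ t ∈ Icc a b, m ≤ (p - 1) / p * |v' t| ^ p)
    (hsimple : ∀ t ∈ Ico a b, v t = 0 → v' t ≠ 0) :
    MonotoneOn (energy p m h F v v') (Icc a b) := by
  have hab : Icc a b ⊆ Icc 0 z := Icc_subset_Icc ha.le hbz
  have hA : ∀ t ∈ Icc a b, 0 ≤ (p - 1) / p * |v' t| ^ p - m :=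
    fun t ht => sub_nonneg.2 (hm t ht)
  have hk : MonotoneOn (fun t => (h t)⁻¹) (Icc a b) :=
    (monotoneOn_inv_of_antitoneOn hhpos hhdec).mono (Icc_subset_Ioc ha hbz)
  have hAc : ContinuousOn (fun t => (p - 1) / p * |v' t| ^ p - m) (Icc a b) :=
    (continuousOn_const.mul ((continuous_abs.rpow_const fun _ => Or.inr (by linarith))
      |>.comp_continuousOn (hv'cont.mono hab))).sub continuousOn_const
  have hBc : ContinuousOn (fun t => F (v t)) (Icc a b) :=
    hFcont.comp_continuousOn fun t ht => (hv t (hab ht)).continuousAt.continuousWithinAt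
  have hreg : ∀ c d, a ≤ c → d ≤ b → (∀ t ∈ Ico c d, v t ≠ 0) →
      MonotoneOn (energy p m h F v v') (Icc c d) := by
    intro c d hac hdb hvne
    have hcd : Icc c d ⊆ Icc a b := Icc_subset_Icc hac hdb
    refine monotoneOn_mul_add (fun t ht => hA t (hcd ht)) (hk.mono hcd) (hAc.mono hcd)
      (hBc.mono hcd) fun x hx => ?_
    have hx' : x ∈ Ioo 0 z := ⟨ha.trans_le (hac.trans hx.1), hx.2.trans_le (hdb.trans hbz)⟩
    exact hasDerivAt_energy_freeze hp (hhpos x (Ioo_subset_Ioc_self hx')).ne'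
      (hF _ (hvne x hx)) (hv x (Ioo_subset_Icc_self hx')) (hode x hx' (hvne x hx))
  refine monotoneOn_mul_add_of_forall_exists_monotoneOn hA hk hAc hBc fun x hx => ?_
  -- zeros of `v` in `[a, b)` are simple, hence isolated
  have hev : ∀ᶠ u in 𝓝[>] x, v u ≠ 0 := by
    have hvx := hv x (hab (Ico_subset_Icc_self hx))
    by_cases hx0 : v x = 0
    · exact (hvx.eventually_ne (hsimple x hx hx0)).filter_mono
        (nhdsWithin_mono _ fun u hu => ne_of_gt hu)
    · exact nhdsWithin_le_nhds (hvx.continuousAt.eventually_ne hx0)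
  obtain ⟨c, hxc, hc⟩ := mem_nhdsGT_iff_exists_Ioo_subset.1 (hev.and (Ioo_mem_nhdsGT hx.2))
  refine ⟨c, hxc, fun s hs t ht hst => hreg s t (hx.1.trans hs.1.le) (hc ht).2.2.le
    (fun u hu => (hc ⟨hs.1.trans_le hu.1, hu.2.trans ht.2⟩).1) ⟨le_rfl, hst⟩ ⟨hst, le_rfl⟩
    hst⟩

theorem exists_half_le_deriv_and_pos {v v' : ℝ → ℝ} {a z : ℝ} (ha : 0 < a) (hz : 0 < z)
    (hv : ∀ t ∈ Icc 0 z, HasDerivAt v (v' t) t) (hv'cont : ContinuousOn v' (Icc 0 z))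
    (hv0 : v 0 = 0) (hv'0 : v' 0 = a) :
    ∃ δ ∈ Ioo 0 z, ∀ t ∈ Icc 0 δ, a / 2 ≤ v' t ∧ (0 < t → 0 < v t) := by
  have hev : ∀ᶠ t in 𝓝[≥] 0, a / 2 < v' t ∧ t < z := by
    have hc : ContinuousWithinAt v' (Ici 0) 0 :=
      (hv'cont 0 ⟨le_rfl, hz.le⟩).mono_of_mem_nhdsWithin (Icc_mem_nhdsGE hz)
    exact (hc.eventually (lt_mem_nhds (by linarith))).and
      (nhdsWithin_le_nhds (eventually_lt_nhds hz))
  obtain ⟨c, hc0, hc⟩ := mem_nhdsGE_iff_exists_Ico_subset.1 hev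
  have hδ : (0 : ℝ) < c / 2 := half_pos hc0
  have hsub : Icc 0 (c / 2) ⊆ Icc 0 z := fun t ht =>
    ⟨ht.1, (hc (Icc_subset_Ico_right (half_lt_self hc0) ht)).2.le⟩
  have hder : ∀ t ∈ Icc 0 (c / 2), a / 2 < v' t := fun t ht =>
    (hc (Icc_subset_Ico_right (half_lt_self hc0) ht)).1
  have hmono : StrictMonoOn v (Icc 0 (c / 2)) := by
    refine strictMonoOn_of_hasDerivWithinAt_pos (convex_Icc _ _)
      (fun t ht => (hv t (hsub ht)).continuousAt.continuousWithinAt)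
      (fun t ht => (hv t (hsub (interior_subset ht))).hasDerivWithinAt)
      fun t ht => (half_pos ha).trans (hder t (interior_subset ht))
  refine ⟨c / 2, ⟨hδ, (hc (Icc_subset_Ico_right (half_lt_self hc0) ⟨hδ.le, le_rfl⟩)).2⟩,
    fun t ht => ⟨(hder t ht).le, fun ht0 => ?_⟩⟩
  simpa [hv0] using hmono ⟨le_rfl, hδ.le⟩ ht ht0

theorem exists_energy_pos {p a z : ℝ} {h f F v v' : ℝ → ℝ} (hp : 1 < p) (ha : 0 < a)
    (hz : 0 < z) (hhpos : ∀ t ∈ Ioc 0 z, 0 < h t) (hhdec : AntitoneOn h (Ioc 0 z))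
    (hF : ∀ x : ℝ, x ≠ 0 → HasDerivAt F (f x) x) (hFcont : Continuous F) (hF0 : F 0 = 0)
    (hv : ∀ t ∈ Icc 0 z, HasDerivAt v (v' t) t) (hv'cont : ContinuousOn v' (Icc 0 z))
    (hode : ∀ t ∈ Ioo 0 z, v t ≠ 0 →
      HasDerivAt (fun s => |v' s| ^ (p - 2) * v' s) (-(h t * f (v t))) t)
    (hv0 : v 0 = 0) (hv'0 : v' 0 = a) :
    ∃ δ ∈ Ioo 0 z, 0 < energy p 0 h F v v' δ := by
  obtain ⟨δ, hδ, hnear⟩ := exists_half_le_deriv_and_pos ha hz hv hv'cont hv0 hv'0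
  set m := (p - 1) / p * (a / 2) ^ p
  have hc : 0 < (p - 1) / p := div_pos (by linarith) (by linarith)
  have hm : 0 < m := mul_pos hc (Real.rpow_pos_of_pos (half_pos ha) p)
  have hmle : ∀ t ∈ Icc 0 δ, m ≤ (p - 1) / p * |v' t| ^ p := fun t ht =>
    mul_le_mul_of_nonneg_left (Real.rpow_le_rpow (half_pos ha).le
      ((hnear t ht).1.trans (le_abs_self _)) (by linarith)) hc.le
  -- `h` may blow up at `0`, so `E` itself need not stay away from `0` near `0`; the margin
  -- `m / h δ` comes from the monotonicity of `E - m / h` while the kinetic term stays above `m`.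
  have hbound : ∀ t ∈ Ioo 0 δ, F (v t) ≤ energy p m h F v v' δ := fun t ht => by
    have hmono := energy_monotoneOn hp hhpos hhdec hF hFcont hv hv'cont hode ht.1 hδ.2.le
      (fun u hu => hmle u ⟨ht.1.le.trans hu.1, hu.2⟩)
      fun u hu hvu =>
        absurd hvu ((hnear u ⟨ht.1.le.trans hu.1, hu.2.le⟩).2 (ht.1.trans_le hu.1)).ne'
    have hkin : 0 ≤ ((p - 1) / p * |v' t| ^ p - m) * (h t)⁻¹ :=
      mul_nonneg (sub_nonneg.2 (hmle t ⟨ht.1.le, ht.2.le⟩))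
        (inv_pos.2 (hhpos t ⟨ht.1, ht.2.le.trans hδ.2.le⟩)).le
    have := hmono ⟨le_rfl, ht.2.le⟩ ⟨ht.2.le, le_rfl⟩ ht.2.le
    unfold energy at this ⊢
    linarith
  have hlim : Tendsto (fun t => F (v t)) (𝓝[>] 0) (𝓝 0) := by
    have := (hFcont.tendsto _).comp (hv 0 ⟨le_rfl, hz.le⟩).continuousAt.tendsto
    rw [Function.comp_def, hv0, hF0] at this
    exact this.mono_left nhdsWithin_le_nhds
  have hEm : 0 ≤ energy p m h F v v' δ :=
    le_of_tendsto hlim (eventually_of_mem (Ioo_mem_nhdsGT hδ.1) hbound)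
  have hkδ : 0 < (h δ)⁻¹ := inv_pos.2 (hhpos δ ⟨hδ.1, hδ.2.le⟩)
  have : energy p 0 h F v v' δ = energy p m h F v v' δ + m * (h δ)⁻¹ := by unfold energy; ring
  exact ⟨δ, hδ, by linarith [mul_pos hm hkδ]⟩

theorem exists_first_common_zero {v v' : ℝ → ℝ} {δ z : ℝ} (hδz : δ ≤ z)
    (hv : ContinuousOn v (Icc δ z)) (hv' : ContinuousOn v' (Icc δ z))
    (hz : v z = 0 ∧ v' z = 0) :
    ∃ T ∈ Icc δ z, (v T = 0 ∧ v' T = 0) ∧ ∀ t ∈ Ico δ T, v t = 0 → v' t ≠ 0 := by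
  set Z := {t ∈ Icc δ z | v t = 0 ∧ v' t = 0}
  have hZ : IsClosed Z := by
    convert (hv.preimage_isClosed_of_isClosed isClosed_Icc isClosed_singleton).inter
      (hv'.preimage_isClosed_of_isClosed isClosed_Icc isClosed_singleton) using 1
    ext t
    simp only [Z, mem_ofPred_eq, mem_inter_iff, mem_preimage, mem_singleton_iff]
    tauto
  obtain ⟨T, ⟨hT, hTz⟩, hmin⟩ :=
    (isCompact_Icc.of_isClosed_subset hZ fun t ht => ht.1).exists_isLeast
      ⟨z, ⟨hδz, le_rfl⟩, hz⟩
  exact ⟨T, hT, hTz, fun t ht hvt hv't =>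
    (hmin ⟨⟨ht.1, ht.2.le.trans hT.2⟩, hvt, hv't⟩).not_gt ht.2⟩

theorem stmt_11 (p a z : ℝ) (h f F v v' : ℝ → ℝ)
    (hp : 1 < p) (ha : 0 < a) (hz : 0 < z)
    (hhpos : ∀ t ∈ Set.Ioc (0 : ℝ) z, 0 < h t)
    (hhdec : AntitoneOn h (Set.Ioc (0 : ℝ) z))
    (hF : ∀ x : ℝ, x ≠ 0 → HasDerivAt F (f x) x)
    (hFcont : Continuous F) (hF0 : F 0 = 0)
    (hv : ∀ t ∈ Set.Icc (0 : ℝ) z, HasDerivAt v (v' t) t)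
    (hv'cont : ContinuousOn v' (Set.Icc 0 z))
    (hode : ∀ t ∈ Set.Ioo (0 : ℝ) z, v t ≠ 0 →
      HasDerivAt (fun s => |v' s| ^ (p - 2) * v' s) (-(h t * f (v t))) t)
    (hv0 : v 0 = 0) (hv'0 : v' 0 = a) :
    ((v z = 0 ∧ v' z = 0) → ∀ t ∈ Set.Icc (0 : ℝ) z, v t = 0) ∧
      (v z = 0 → v' z ≠ 0) := by
  have hnot : ¬(v z = 0 ∧ v' z = 0) := by
    intro hzero
    obtain ⟨δ, hδ, hEδ⟩ :=
      exists_energy_pos hp ha hz hhpos hhdec hF hFcont hF0 hv hv'cont hode hv0 hv'0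
    have hsub : Icc δ z ⊆ Icc 0 z := Icc_subset_Icc_left hδ.1.le
    obtain ⟨T, hT, hTzero, hsimple⟩ := exists_first_common_zero hδ.2.le
      (fun t ht => (hv t (hsub ht)).continuousAt.continuousWithinAt) (hv'cont.mono hsub) hzero
    have hmono := energy_monotoneOn (m := 0) hp hhpos hhdec hF hFcont hv hv'cont hode hδ.1 hT.2
      (fun t _ => by positivity) hsimple
    have hET : energy p 0 h F v v' T = 0 := by
      simp [energy, hTzero.1, hTzero.2, hF0, Real.zero_rpow (by linarith : p ≠ 0)]
    linarith [hmono ⟨le_rfl, hT.1⟩ ⟨hT.1, le_rfl⟩ hT.1]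
  exact ⟨fun hzero => absurd hzero hnot, fun hvz hv'z => hnot ⟨hvz, hv'z⟩⟩
end

section
/- Let v : [t₀, T] → ℝ be C¹ and positive with v' > 0, satisfying the differential inequality ((v'/v)^(p-1))' ≤ -(p-1)(v'/v)^p on [t₀, T] where p > 1. Then v'(t)/v(t) ≤ 1/(t - t₀) for all t ∈ (t₀, T]. -/
/-!
With `q = p - 1` and `y = (v'/v)^q`, the hypothesis reads `y' ≤ -q y^(1 + 1/q)`. Then
`w = y^(-1/q) = v/v'` satisfies `w' ≥ 1`, so `w t ≥ w t₀ + (t - t₀) > t - t₀`; inverting gives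
the bound.
-/

open Set Real

theorem one_le_neg_inv_mul_rpow_mul {q y y' : ℝ} (hq : 0 < q) (hy : 0 < y)
    (h : y' ≤ -q * y ^ (1 + q⁻¹)) : 1 ≤ -q⁻¹ * y ^ (-q⁻¹ - 1) * y' := by
  have hcoef : -q⁻¹ * y ^ (-q⁻¹ - 1) < 0 :=
    mul_neg_of_neg_of_pos (neg_neg_of_pos (inv_pos.2 hq)) (rpow_pos_of_pos hy _)
  calc (1 : ℝ) = (-q⁻¹ * -q) * y ^ (-q⁻¹ - 1 + (1 + q⁻¹)) := by
        rw [neg_mul_neg, inv_mul_cancel₀ hq.ne', show -q⁻¹ - 1 + (1 + q⁻¹) = 0 by ring,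
          rpow_zero, one_mul]
    _ = -q⁻¹ * y ^ (-q⁻¹ - 1) * (-q * y ^ (1 + q⁻¹)) := by rw [rpow_add hy]; ring
    _ ≤ -q⁻¹ * y ^ (-q⁻¹ - 1) * y' := mul_le_mul_of_nonpos_left h hcoef.le

theorem rpow_neg_inv_add_sub_le {q a b : ℝ} {y y' : ℝ → ℝ} (hq : 0 < q) (hab : a ≤ b)
    (hy : ∀ t ∈ Icc a b, HasDerivAt y (y' t) t) (hpos : ∀ t ∈ Icc a b, 0 < y t)
    (hineq : ∀ t ∈ Icc a b, y' t ≤ -q * y t ^ (1 + q⁻¹)) :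
    y a ^ (-q⁻¹) + (b - a) ≤ y b ^ (-q⁻¹) := by
  have hw : ∀ t ∈ Icc a b,
      HasDerivAt (fun s => y s ^ (-q⁻¹)) (-q⁻¹ * y t ^ (-q⁻¹ - 1) * y' t) t := fun t ht => by
    convert (hy t ht).rpow_const (Or.inl (hpos t ht).ne') using 1
    ring
  have hmvt := (convex_Icc a b).mul_sub_le_image_sub_of_le_deriv (C := 1)
    (fun t ht => (hw t ht).continuousAt.continuousWithinAt)
    (fun t ht => (hw t (interior_subset ht)).differentiableAt.differentiableWithinAt)
    (fun t ht => (hw t (interior_subset ht)).deriv ▸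
      one_le_neg_inv_mul_rpow_mul hq (hpos t (interior_subset ht)) (hineq t (interior_subset ht)))
    a (left_mem_Icc.2 hab) b (right_mem_Icc.2 hab) hab
  linarith

theorem stmt_13_general (p t₀ T : ℝ) (v v' y' : ℝ → ℝ)
    (hp : 1 < p)
    (hvpos : ∀ t ∈ Set.Icc t₀ T, 0 < v t)
    (hv'pos : ∀ t ∈ Set.Icc t₀ T, 0 < v' t)
    (hy : ∀ t ∈ Set.Icc t₀ T, HasDerivAt (fun s => (v' s / v s) ^ (p - 1)) (y' t) t)
    (hineq : ∀ t ∈ Set.Icc t₀ T, y' t ≤ -(p - 1) * (v' t / v t) ^ p) :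
    ∀ t ∈ Set.Ioc t₀ T, v' t / v t ≤ 1 / (t - t₀) := by
  rintro t ⟨ht₀, htT⟩
  have hq : 0 < p - 1 := sub_pos.2 hp
  have hsub : Icc t₀ t ⊆ Icc t₀ T := Icc_subset_Icc_right htT
  have hratio : ∀ s ∈ Icc t₀ T, 0 < v' s / v s := fun s hs => div_pos (hv'pos s hs) (hvpos s hs)
  have hpow : ∀ s ∈ Icc t₀ T, ((v' s / v s) ^ (p - 1)) ^ (1 + (p - 1)⁻¹) = (v' s / v s) ^ p :=
    fun s hs => by
      rw [← rpow_mul (hratio s hs).le, mul_add, mul_one, mul_inv_cancel₀ hq.ne', sub_add_cancel]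
  have hinv : ∀ s ∈ Icc t₀ T, ((v' s / v s) ^ (p - 1)) ^ (-(p - 1)⁻¹) = (v' s / v s)⁻¹ :=
    fun s hs => by rw [← rpow_mul (hratio s hs).le, mul_neg, mul_inv_cancel₀ hq.ne', rpow_neg_one]
  have key := rpow_neg_inv_add_sub_le hq ht₀.le (fun s hs => hy s (hsub hs))
    (fun s hs => rpow_pos_of_pos (hratio s (hsub hs)) _)
    (fun s hs => (hpow s (hsub hs)).symm ▸ hineq s (hsub hs))
  have htIcc : t ∈ Icc t₀ T := ⟨ht₀.le, htT⟩
  have ht₀Icc : t₀ ∈ Icc t₀ T := ⟨le_rfl, ht₀.le.trans htT⟩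
  rw [hinv t htIcc, hinv t₀ ht₀Icc] at key
  rw [one_div, le_inv_comm₀ (hratio t htIcc) (sub_pos.2 ht₀)]
  linarith [inv_pos.2 (hratio t₀ ht₀Icc)]

theorem stmt_13 (p t₀ T : ℝ) (v v' y' : ℝ → ℝ)
    (hp : 1 < p) (ht : t₀ < T)
    (hv : ∀ t ∈ Set.Icc t₀ T, HasDerivAt v (v' t) t)
    (hvpos : ∀ t ∈ Set.Icc t₀ T, 0 < v t)
    (hv'pos : ∀ t ∈ Set.Icc t₀ T, 0 < v' t)
    (hy : ∀ t ∈ Set.Icc t₀ T, HasDerivAt (fun s => (v' s / v s) ^ (p - 1)) (y' t) t)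
    (hineq : ∀ t ∈ Set.Icc t₀ T, y' t ≤ -(p - 1) * (v' t / v t) ^ p) :
    ∀ t ∈ Set.Ioc t₀ T, v' t / v t ≤ 1 / (t - t₀) :=
  stmt_13_general p t₀ T v v' y' hp hvpos hv'pos hy hineq
end

section
/- Let p > 1, h > 0 decreasing, F continuous with F(0) = 0, and let v be C¹, positive and strictly decreasing on [M, T] with v'(M) = 0, satisfying ((p-1)/p)|v'|^p/h + F(v) ≥ F(v(M)) > F(v(t)) on (M, T). Then ∫_M^T h(t)^(1/p) dt ≤ ((p-1)/p)^(1/p) ∫_{v(T)}^{v(M)} dt / (F(v(M)) - F(t))^(1/p) ≤ ((p-1)/p)^(1/p) ∫_0^{v(M)} dt / (F(v(M)) - F(t))^(1/p). -/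
/-!
The energy inequality says `h (F (v M) - F (v t)) ≤ ((p - 1) / p) |v'| ^ p`; taking `p`-th roots,
`h ^ (1 / p) ≤ ((p - 1) / p) ^ (1 / p) |v'| / (F (v M) - F (v)) ^ (1 / p)` on `(M, T)`.
Integrating over `[M, T]` and substituting `u = v t` (legitimate since `v` is strictly decreasing)
turns the right-hand side into the integral over `[v T, v M]`, which is at most the integral over
`[0, v M]` because the integrand is nonnegative and `0 < v T`.
-/

open Set MeasureTheory intervalIntegral

lemma rpow_one_div_le_of_le_mul_rpow_div {p a b c w : ℝ} (hp : 0 < p) (ha : 0 < a)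
    (hb : 0 < b) (hc : 0 ≤ c) (hw : 0 ≤ w) (h : b ≤ c * w ^ p / a) :
    a ^ (1 / p) ≤ c ^ (1 / p) * (w * (1 / b ^ (1 / p))) := by
  have hab : a * b ≤ c * w ^ p := by
    rw [le_div_iff₀ ha] at h
    linarith
  have hroot : (a * b) ^ (1 / p) ≤ (c * w ^ p) ^ (1 / p) :=
    Real.rpow_le_rpow (by positivity) hab (by positivity)
  rw [Real.mul_rpow ha.le hb.le, Real.mul_rpow hc (by positivity), ← Real.rpow_mul hw,
    mul_one_div_cancel hp.ne', Real.rpow_one] at hroot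
  rw [mul_one_div, ← mul_div_assoc, le_div_iff₀ (by positivity)]
  exact hroot

lemma AntitoneOn.rpow_const {f : ℝ → ℝ} {s : Set ℝ} {r : ℝ} (hf : AntitoneOn f s)
    (hf_nonneg : ∀ x ∈ s, 0 ≤ f x) (hr : 0 ≤ r) : AntitoneOn (fun x => f x ^ r) s :=
  fun _ hx _ hy hxy => Real.rpow_le_rpow (hf_nonneg _ hy) (hf hx hy hxy) hr

section ChangeOfVariables

variable {a b : ℝ} {v v' : ℝ → ℝ}

lemma integral_abs_deriv_mul_comp_of_strictAntiOn (hab : a ≤ b)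
    (hv : ∀ t ∈ Icc a b, HasDerivAt v (v' t) t) (hanti : StrictAntiOn v (Icc a b))
    (g : ℝ → ℝ) :
    ∫ t in a..b, |v' t| * g (v t) = ∫ u in v b..v a, g u := by
  have hvab : v b ≤ v a := hanti.antitoneOn ⟨le_rfl, hab⟩ ⟨hab, le_rfl⟩ hab
  rw [integral_of_le hab, integral_of_le hvab, integral_Ioc_eq_integral_Ioo,
    integral_Ioc_eq_integral_Ioo,
    ← (HasDerivAt.continuousOn hv).image_Ioo_of_strictAntiOn hab hanti,
    integral_image_eq_integral_abs_deriv_smul measurableSet_Ioo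
      (fun t ht => (hv t (Ioo_subset_Icc_self ht)).hasDerivWithinAt)
      (hanti.injOn.mono Ioo_subset_Icc_self)]
  rfl

lemma IntervalIntegrable.abs_deriv_mul_comp_of_strictAntiOn (hab : a ≤ b)
    (hv : ∀ t ∈ Icc a b, HasDerivAt v (v' t) t) (hanti : StrictAntiOn v (Icc a b))
    {g : ℝ → ℝ} (hg : IntervalIntegrable g volume (v b) (v a)) :
    IntervalIntegrable (fun t => |v' t| * g (v t)) volume a b := by
  have hvab : v b ≤ v a := hanti.antitoneOn ⟨le_rfl, hab⟩ ⟨hab, le_rfl⟩ hab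
  rw [intervalIntegrable_iff_integrableOn_Ioo_of_le hab]
  rwa [intervalIntegrable_iff_integrableOn_Ioo_of_le hvab,
    ← (HasDerivAt.continuousOn hv).image_Ioo_of_strictAntiOn hab hanti,
    integrableOn_image_iff_integrableOn_abs_deriv_smul measurableSet_Ioo
      (fun t ht => (hv t (Ioo_subset_Icc_self ht)).hasDerivWithinAt)
      (hanti.injOn.mono Ioo_subset_Icc_self)] at hg

end ChangeOfVariables

theorem stmt_17_general (p M T : ℝ) (h F v v' : ℝ → ℝ)
    (hp : 1 < p) (hMT : M < T)
    (hhpos : ∀ t ∈ Set.Icc M T, 0 < h t)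
    (hhdec : AntitoneOn h (Set.Icc M T))
    (hv : ∀ t ∈ Set.Icc M T, HasDerivAt v (v' t) t)
    (hvpos : ∀ t ∈ Set.Icc M T, 0 < v t)
    (hvdec : StrictAntiOn v (Set.Icc M T))
    (hFlt : ∀ t ∈ Set.Ico (0 : ℝ) (v M), F t < F (v M))
    (hFint : IntervalIntegrable (fun t => 1 / (F (v M) - F t) ^ (1 / p))
      MeasureTheory.volume 0 (v M))
    (henergy : ∀ t ∈ Set.Icc M T,
      F (v M) ≤ (p - 1) / p * |v' t| ^ p / h t + F (v t)) :
    (∫ t in M..T, h t ^ (1 / p)) ≤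
        ((p - 1) / p) ^ (1 / p) * ∫ t in (v T)..(v M), 1 / (F (v M) - F t) ^ (1 / p) ∧
      ((p - 1) / p) ^ (1 / p) * (∫ t in (v T)..(v M), 1 / (F (v M) - F t) ^ (1 / p)) ≤
        ((p - 1) / p) ^ (1 / p) * ∫ t in (0 : ℝ)..(v M), 1 / (F (v M) - F t) ^ (1 / p) := by
  set g : ℝ → ℝ := fun u => 1 / (F (v M) - F u) ^ (1 / p)
  have hc : 0 < (p - 1) / p := div_pos (by linarith) (by linarith)
  have hM : M ∈ Icc M T := ⟨le_rfl, hMT.le⟩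
  have hvT : 0 < v T := hvpos T ⟨hMT.le, le_rfl⟩
  have hvTM : v T < v M := hvdec hM ⟨hMT.le, le_rfl⟩ hMT
  have hpointwise : ∀ t ∈ Ioo M T,
      h t ^ (1 / p) ≤ ((p - 1) / p) ^ (1 / p) * (|v' t| * g (v t)) := fun t ht => by
    have ht' := Ioo_subset_Icc_self ht
    have hgap : 0 < F (v M) - F (v t) :=
      sub_pos.mpr (hFlt _ ⟨(hvpos t ht').le, hvdec hM ht' ht.1⟩)
    exact rpow_one_div_le_of_le_mul_rpow_div (by linarith) (hhpos t ht') hgap hc.le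
      (abs_nonneg _) (by linarith [henergy t ht'])
  have hroot_anti : AntitoneOn (fun t => h t ^ (1 / p)) (uIcc M T) := by
    rw [uIcc_of_le hMT.le]
    exact hhdec.rpow_const (fun t ht => (hhpos t ht).le) (by positivity)
  have hg_int : IntervalIntegrable g volume (v T) (v M) := hFint.mono_set <| by
    rw [uIcc_of_le hvTM.le, uIcc_of_le (hvT.trans hvTM).le]
    exact Icc_subset_Icc hvT.le le_rfl
  have hg_nonneg : ∀ u ∈ Ioc 0 (v M), 0 ≤ g u := fun u hu => by
    have hFu : F u ≤ F (v M) := by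
      rcases hu.2.lt_or_eq with hlt | rfl
      exacts [(hFlt u ⟨hu.1.le, hlt⟩).le, le_rfl]
    exact one_div_nonneg.mpr (Real.rpow_nonneg (sub_nonneg.mpr hFu) _)
  refine ⟨?_, mul_le_mul_of_nonneg_left ?_ (Real.rpow_nonneg hc.le _)⟩
  · calc (∫ t in M..T, h t ^ (1 / p))
        ≤ ∫ t in M..T, ((p - 1) / p) ^ (1 / p) * (|v' t| * g (v t)) :=
          integral_mono_on_of_le_Ioo hMT.le hroot_anti.intervalIntegrable
            ((hg_int.abs_deriv_mul_comp_of_strictAntiOn hMT.le hv hvdec).const_mul _) hpointwise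
      _ = ((p - 1) / p) ^ (1 / p) * ∫ u in v T..v M, g u := by
          rw [intervalIntegral.integral_const_mul,
            integral_abs_deriv_mul_comp_of_strictAntiOn hMT.le hv hvdec]
  · exact integral_mono_interval hvT.le hvTM.le le_rfl
      (ae_restrict_of_forall_mem measurableSet_Ioc hg_nonneg) hFint

theorem stmt_17 (p M T : ℝ) (h F v v' : ℝ → ℝ)
    (hp : 1 < p) (hMT : M < T)
    (hhpos : ∀ t ∈ Set.Icc M T, 0 < h t)
    (hhdec : AntitoneOn h (Set.Icc M T))
    (hFcont : Continuous F) (hF0 : F 0 = 0)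
    (hv : ∀ t ∈ Set.Icc M T, HasDerivAt v (v' t) t)
    (hv'cont : ContinuousOn v' (Set.Icc M T))
    (hvpos : ∀ t ∈ Set.Icc M T, 0 < v t)
    (hvdec : StrictAntiOn v (Set.Icc M T))
    (hv'M : v' M = 0)
    (hFlt : ∀ t ∈ Set.Ico (0 : ℝ) (v M), F t < F (v M))
    (hFint : IntervalIntegrable (fun t => 1 / (F (v M) - F t) ^ (1 / p))
      MeasureTheory.volume 0 (v M))
    (henergy : ∀ t ∈ Set.Icc M T,
      F (v M) ≤ (p - 1) / p * |v' t| ^ p / h t + F (v t)) :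
    (∫ t in M..T, h t ^ (1 / p)) ≤
        ((p - 1) / p) ^ (1 / p) * ∫ t in (v T)..(v M), 1 / (F (v M) - F t) ^ (1 / p) ∧
      ((p - 1) / p) ^ (1 / p) * (∫ t in (v T)..(v M), 1 / (F (v M) - F t) ^ (1 / p)) ≤
        ((p - 1) / p) ^ (1 / p) * ∫ t in (0 : ℝ)..(v M), 1 / (F (v M) - F t) ^ (1 / p) :=
  stmt_17_general p M T h F v v' hp hMT hhpos hhdec hv hvpos hvdec hFlt hFint henergy
end
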